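/- arXiv:2512.16507 — 2 statements merged into one kernel-verified Lean document; each statement's English description precedes it below -/
import Mathlib

section
/- For every integer r ≥ 2, with n = 3r − 1, the quantities C(6r−2, 2r−1) − C(6r−2, 2r−3) and C(6r−2, 2r) − C(6r−2, 2r−2) are not equal. -/
/-!
By Pascal's rule, `C(n, k+2) − C(n, k) = C(n+1, k+2) − C(n+1, k+1)`, so the two quantities differ
by the second difference of row `6r − 1` of Pascal's triangle at `2r − 2`. Since
`C(n, k+1) (k+1) = C(n, k) (n−k)`, the sign of the second difference at `k` is that of
`(n−k)(n−k−1) − 2(n−k)(k+2) + (k+1)(k+2)`, which here equals `4r² − 2r > 0`.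
-/
theorem Nat.cast_choose_succ_right_mul (n k : ℕ) :
    (n.choose (k + 1) : ℤ) * (k + 1) = n.choose k * (n - k) := by
  rcases le_or_gt k n with hk | hk
  · have := Nat.choose_succ_right_eq n k
    rw [← Nat.cast_sub hk]
    exact_mod_cast this
  · simp [Nat.choose_eq_zero_of_lt hk, Nat.choose_eq_zero_of_lt (Nat.lt_succ_of_lt hk)]

theorem Nat.cast_choose_second_diff_mul (n k : ℕ) :
    ((n.choose (k + 2) : ℤ) - 2 * n.choose (k + 1) + n.choose k) * ((k + 1) * (k + 2)) =
      n.choose k * ((n - k) * (n - k - 1) - 2 * (n - k) * (k + 2) + (k + 1) * (k + 2)) := by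
  have h₀ := Nat.cast_choose_succ_right_mul n k
  have h₁ := Nat.cast_choose_succ_right_mul n (k + 1)
  push_cast at h₁
  linear_combination (k + 1 : ℤ) * h₁ + ((n : ℤ) - k - 1 - 2 * (k + 2)) * h₀

theorem Nat.two_mul_choose_succ_lt_choose_add_choose {n k : ℕ} (hk : k ≤ n)
    (h : 2 * ((n : ℤ) - k) * (k + 2) < (n - k) * (n - k - 1) + (k + 1) * (k + 2)) :
    2 * (n.choose (k + 1) : ℤ) < n.choose (k + 2) + n.choose k := by
  have hpos : 0 < ((n.choose (k + 2) : ℤ) - 2 * n.choose (k + 1) + n.choose k) *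
      ((k + 1) * (k + 2)) := by
    rw [Nat.cast_choose_second_diff_mul]
    exact mul_pos (by exact_mod_cast Nat.choose_pos hk) (by linarith)
  have := pos_of_mul_pos_left hpos (by positivity)
  linarith

theorem Nat.cast_choose_add_two_sub_choose (n k : ℕ) :
    (n.choose (k + 2) : ℤ) - n.choose k = (n + 1).choose (k + 2) - (n + 1).choose (k + 1) := by
  rw [Nat.choose_succ_succ' n (k + 1), Nat.choose_succ_succ' n k]
  push_cast
  ring

/-- For every integer `r ≥ 2`, the quantities `C(6r−2, 2r−1) − C(6r−2, 2r−3)`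
and `C(6r−2, 2r) − C(6r−2, 2r−2)` are not equal. -/
theorem stmt_8 (r : ℕ) (hr : 2 ≤ r) :
    ((6 * r - 2).choose (2 * r - 1) : ℤ) - (6 * r - 2).choose (2 * r - 3) ≠
      ((6 * r - 2).choose (2 * r) : ℤ) - (6 * r - 2).choose (2 * r - 2) := by
  obtain ⟨s, rfl⟩ := Nat.exists_eq_add_of_le' hr
  rw [show 6 * (s + 2) - 2 = 6 * s + 10 by omega, show 2 * (s + 2) - 1 = 2 * s + 1 + 2 by omega,
    show 2 * (s + 2) - 3 = 2 * s + 1 by omega, show 2 * (s + 2) - 2 = 2 * s + 2 by omega,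
    show 2 * (s + 2) = 2 * s + 2 + 2 by omega, Nat.cast_choose_add_two_sub_choose,
    Nat.cast_choose_add_two_sub_choose]
  have hconvex := Nat.two_mul_choose_succ_lt_choose_add_choose (n := 6 * s + 10 + 1)
    (k := 2 * s + 2) (by omega) (by push_cast; nlinarith)
  rw [show 2 * s + 2 + 1 = 2 * s + 1 + 2 by omega] at hconvex
  exact ne_of_lt (by linarith)
end

section
/- For r ≥ 2 and 2 ≤ p ≤ 2r, every coordinate of μ'_p + ρ has absolute value strictly less than 3r−1, where μ'_p = −(2p−2) Σ_{j=1}^{p} L_j − (2p−1) Σ_{j=p+1}^{2r} L_j and ρ = Σ_{j=1}^{3r−1} (3r−j) L_j. For p = 1, the coordinate at L_1 equals 3r−1 but all other coordinates have absolute value strictly less than 3r−2. -/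
/-- The `j`-th coordinate of `μ'_p + ρ`. -/
def shiftedWeightCoord (r p j : ℤ) : ℤ :=
  if j ≤ p then (3 * r - j) - (2 * p - 2)
  else if j ≤ 2 * r then (3 * r - j) - (2 * p - 1)
  else 3 * r - j

/- On `1 ≤ j ≤ 3r − 1` the coordinate is largest at `j = 1`, where it is `3r − 2p + 1`, and
smallest at `j = 2r`, where it is `r − 2p + 1 ≥ −3r + 3` if `p < 2r` and `−3r + 2` if `p = 2r`. -/
theorem abs_shiftedWeightCoord_lt {r p j : ℤ} (hp : 2 ≤ p) (hpr : p ≤ 2 * r) (hj : 1 ≤ j)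
    (hjr : j ≤ 3 * r - 1) : |shiftedWeightCoord r p j| < 3 * r - 1 := by
  unfold shiftedWeightCoord
  split_ifs <;> rw [abs_lt] <;> omega

theorem shiftedWeightCoord_one_one (r : ℤ) : shiftedWeightCoord r 1 1 = 3 * r - 1 := by
  simp [shiftedWeightCoord]

theorem abs_shiftedWeightCoord_one_lt {r j : ℤ} (hj : 2 ≤ j) (hjr : j ≤ 3 * r - 1) :
    |shiftedWeightCoord r 1 j| < 3 * r - 2 := by
  unfold shiftedWeightCoord
  split_ifs <;> rw [abs_lt] <;> omega

theorem stmt_14_general (r p : ℤ) :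
    (2 ≤ p → p ≤ 2 * r → ∀ j : ℤ, 1 ≤ j → j ≤ 3 * r - 1 →
      |if j ≤ p then (3 * r - j) - (2 * p - 2)
        else if j ≤ 2 * r then (3 * r - j) - (2 * p - 1)
        else 3 * r - j| < 3 * r - 1) ∧
    (p = 1 →
      ((if (1 : ℤ) ≤ p then (3 * r - 1) - (2 * p - 2)
          else if (1 : ℤ) ≤ 2 * r then (3 * r - 1) - (2 * p - 1)
          else 3 * r - 1) = 3 * r - 1) ∧
      ∀ j : ℤ, 2 ≤ j → j ≤ 3 * r - 1 →
        |if j ≤ p then (3 * r - j) - (2 * p - 2)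
          else if j ≤ 2 * r then (3 * r - j) - (2 * p - 1)
          else 3 * r - j| < 3 * r - 2) := by
  refine ⟨fun hp hpr j hj hjr => abs_shiftedWeightCoord_lt hp hpr hj hjr, ?_⟩
  rintro rfl
  exact ⟨shiftedWeightCoord_one_one r, fun j hj hjr => abs_shiftedWeightCoord_one_lt hj hjr⟩

/-- For `r ≥ 2`, consider the coordinates of `μ'_p + ρ` in the basis
`L_1, …, L_{3r−1}`: the `j`-th coordinate is `(3r−j) − (2p−2)` for `1 ≤ j ≤ p`,
`(3r−j) − (2p−1)` for `p+1 ≤ j ≤ 2r`, and `3r−j` for `j > 2r`.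
For `2 ≤ p ≤ 2r`, every coordinate has absolute value strictly less than `3r−1`.
For `p = 1`, the coordinate at `L_1` equals `3r−1`, but all other coordinates
have absolute value strictly less than `3r−2`. -/
theorem stmt_14 (r p : ℤ) (hr : 2 ≤ r) :
    (2 ≤ p → p ≤ 2 * r → ∀ j : ℤ, 1 ≤ j → j ≤ 3 * r - 1 →
      |if j ≤ p then (3 * r - j) - (2 * p - 2)
        else if j ≤ 2 * r then (3 * r - j) - (2 * p - 1)
        else 3 * r - j| < 3 * r - 1) ∧
    (p = 1 →
      ((if (1 : ℤ) ≤ p then (3 * r - 1) - (2 * p - 2)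
          else if (1 : ℤ) ≤ 2 * r then (3 * r - 1) - (2 * p - 1)
          else 3 * r - 1) = 3 * r - 1) ∧
      ∀ j : ℤ, 2 ≤ j → j ≤ 3 * r - 1 →
        |if j ≤ p then (3 * r - j) - (2 * p - 2)
          else if j ≤ 2 * r then (3 * r - j) - (2 * p - 1)
          else 3 * r - j| < 3 * r - 2) :=
  stmt_14_general r p
end
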